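/- For every c-formula ψ containing exactly m occurrences of unreliable connectives and every valuation v : X → {⊥,⊤}, the polynomial P^v_ψ ∈ ℝ[ν] has degree at most m and all its coefficients are integers of absolute value at most 4^m. -/

import Mathlib

namespace UCL

/-- The mode of a connective occurrence: the ideal (reliable) connective `c`,
its negated-output counterpart `c̄`, or its unreliable counterpart `c̃`. -/
inductive Mode where
  | ideal | negated | unreliable
deriving DecidableEq

/-- The binary connectives of the signature. -/
inductive BinConn where
  | and | or | imp | iff
deriving DecidableEq

/-- Formulas over the UCL signature `Σfc` and the set `X` of propositional
variables: constants, variables, negation family, binary connective families,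
and the `(3+2k)`-ary majority families (each in one of the three modes). -/
inductive Form (X : Type) where
  | verum : Form X
  | falsum : Form X
  | var : X → Form X
  | not : Mode → Form X → Form X
  | bin : BinConn → Mode → Form X → Form X → Form X
  | maj : (k : ℕ) → Mode → (Fin (3 + 2 * k) → Form X) → Form X

variable {X : Type}

/-- Output of a connective occurrence: negated-output counterparts negate. -/
def applyMode (m : Mode) (b : Bool) : Bool := if m = .negated then !b else b

def binSem : BinConn → Bool → Bool → Bool
  | .and, a, b => a && b
  | .or, a, b => a || b
  | .imp, a, b => !a || b
  | .iff, a, b => a == b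

/-- Classical satisfaction of a formula by a valuation (meaningful for PL
formulas; unreliable connectives are evaluated like their ideal versions). -/
def Form.eval (v : X → Bool) : Form X → Bool
  | .verum => true
  | .falsum => false
  | .var x => v x
  | .not m φ => applyMode m (!(φ.eval v))
  | .bin c m φ ψ => applyMode m (binSem c (φ.eval v) (ψ.eval v))
  | .maj k m f => applyMode m (decide (3 + 2 * k < 2 * ∑ i, ((f i).eval v).toNat))

/-- A PL formula: contains no unreliable connectives. -/
def Form.IsPL : Form X → Prop
  | .verum => True
  | .falsum => True
  | .var _ => True
  | .not m φ => m ≠ .unreliable ∧ φ.IsPL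
  | .bin _ m φ ψ => m ≠ .unreliable ∧ φ.IsPL ∧ ψ.IsPL
  | .maj _ m f => m ≠ .unreliable ∧ ∀ i, (f i).IsPL

/-- The outcome relation `φ ⊳ ψ` between PL formulas `φ` and c-formulas `ψ`. -/
inductive Outcome : Form X → Form X → Prop where
  | refl (φ : Form X) : φ.IsPL → Outcome φ φ
  | notC {m : Mode} {φ ψ : Form X} (hm : m ≠ .unreliable) :
      Outcome φ ψ → Outcome (.not m φ) (.not m ψ)
  | binC {c : BinConn} {m : Mode} {φ₁ φ₂ ψ₁ ψ₂ : Form X} (hm : m ≠ .unreliable) :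
      Outcome φ₁ ψ₁ → Outcome φ₂ ψ₂ → Outcome (.bin c m φ₁ φ₂) (.bin c m ψ₁ ψ₂)
  | majC {k : ℕ} {m : Mode} {f g : Fin (3 + 2 * k) → Form X} (hm : m ≠ .unreliable) :
      (∀ i, Outcome (f i) (g i)) → Outcome (.maj k m f) (.maj k m g)
  | notOk {φ ψ : Form X} : Outcome φ ψ → Outcome (.not .ideal φ) (.not .unreliable ψ)
  | notFail {φ ψ : Form X} : Outcome φ ψ → Outcome (.not .negated φ) (.not .unreliable ψ)
  | binOk {c : BinConn} {φ₁ φ₂ ψ₁ ψ₂ : Form X} :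
      Outcome φ₁ ψ₁ → Outcome φ₂ ψ₂ →
      Outcome (.bin c .ideal φ₁ φ₂) (.bin c .unreliable ψ₁ ψ₂)
  | binFail {c : BinConn} {φ₁ φ₂ ψ₁ ψ₂ : Form X} :
      Outcome φ₁ ψ₁ → Outcome φ₂ ψ₂ →
      Outcome (.bin c .negated φ₁ φ₂) (.bin c .unreliable ψ₁ ψ₂)
  | majOk {k : ℕ} {f g : Fin (3 + 2 * k) → Form X} :
      (∀ i, Outcome (f i) (g i)) → Outcome (.maj k .ideal f) (.maj k .unreliable g)
  | majFail {k : ℕ} {f g : Fin (3 + 2 * k) → Form X} :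
      (∀ i, Outcome (f i) (g i)) → Outcome (.maj k .negated f) (.maj k .unreliable g)

/-- The probability factor contributed by one connective occurrence:
the circuit connective has mode `m`, the outcome one mode `m'`. -/
noncomputable def modeFactor (m m' : Mode) : Polynomial ℝ :=
  match m, m' with
  | .unreliable, .ideal => Polynomial.X
  | .unreliable, .negated => 1 - Polynomial.X
  | .ideal, .ideal => 1
  | .negated, .negated => 1
  | _, _ => 0

/-- `Pν[ψ ▷ φ]`, written `prob ψ φ`: the probability polynomial of outcome `φ`
of the c-formula `ψ` (junk value `0` when `φ` is not an outcome of `ψ`). -/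
noncomputable def Form.prob [DecidableEq X] (ψ φ : Form X) : Polynomial ℝ :=
  match ψ, φ with
  | .verum, .verum => 1
  | .falsum, .falsum => 1
  | .var x, .var y => if x = y then 1 else 0
  | .not m ψ, .not m' φ => modeFactor m m' * ψ.prob φ
  | .bin c m ψ₁ ψ₂, .bin c' m' φ₁ φ₂ =>
      if c = c' then modeFactor m m' * (ψ₁.prob φ₁ * ψ₂.prob φ₂) else 0
  | .maj k m g, .maj k' m' f =>
      if h : k = k' then
        modeFactor m m' * ∏ i : Fin (3 + 2 * k), (g i).prob (f (Fin.cast (by omega) i))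
      else 0
  | _, _ => 0
termination_by structural ψ

/-- Number of occurrences of unreliable connectives in a formula. -/
def Form.unrelCount : Form X → ℕ
  | .verum => 0
  | .falsum => 0
  | .var _ => 0
  | .not m φ => (if m = .unreliable then 1 else 0) + φ.unrelCount
  | .bin _ m φ ψ => (if m = .unreliable then 1 else 0) + φ.unrelCount + ψ.unrelCount
  | .maj _ m f => (if m = .unreliable then 1 else 0) + ∑ i, (f i).unrelCount

/-- Number of occurrences of unreliable connectives of the c-formula `ψ` that
are replaced by their ideal counterparts in the outcome `φ` (junk value when
`φ` is not an outcome of `ψ`). -/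
def Form.idealRepl (ψ φ : Form X) : ℕ :=
  match ψ, φ with
  | .not m ψ, .not m' φ =>
      (if m = .unreliable ∧ m' = .ideal then 1 else 0) + ψ.idealRepl φ
  | .bin _ m ψ₁ ψ₂, .bin _ m' φ₁ φ₂ =>
      (if m = .unreliable ∧ m' = .ideal then 1 else 0) + ψ₁.idealRepl φ₁ + ψ₂.idealRepl φ₂
  | .maj k m g, .maj k' m' f =>
      (if m = .unreliable ∧ m' = .ideal then 1 else 0) +
        (if h : k = k' then ∑ i : Fin (3 + 2 * k), (g i).idealRepl (f (Fin.cast (by omega) i))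
         else 0)
  | _, _ => 0
termination_by structural ψ

/-- `P^v_ψ(ν)`: the aggregated probability, at reliability rate `ν`, of the
outcomes of `ψ` satisfied by the valuation `v`. -/
noncomputable def Pval [DecidableEq X] (v : X → Bool) (ψ : Form X) (ν : ℝ) : ℝ :=
  ∑ᶠ φ ∈ {φ : Form X | Outcome φ ψ ∧ φ.eval v = true}, (ψ.prob φ).eval ν

/-- `P^v_ψ` as a polynomial in `ℝ[ν]`. -/
noncomputable def Ppoly [DecidableEq X] (v : X → Bool) (ψ : Form X) : Polynomial ℝ :=
  ∑ᶠ φ ∈ {φ : Form X | Outcome φ ψ ∧ φ.eval v = true}, ψ.prob φ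

/-- An interpretation `I = (v, ρ)` of UCL. -/
structure Interp (X : Type) where
  v : X → Bool
  nu : ℝ
  mu : ℝ
  nu_gt : 1 / 2 < nu
  nu_le : nu ≤ 1
  mu_gt : 1 / 2 < mu
  mu_le : mu ≤ 1

/-- Satisfaction of a c-formula by an interpretation. -/
def satC [DecidableEq X] (I : Interp X) (ψ : Form X) : Prop :=
  I.mu ≤ Pval I.v ψ I.nu

/-- Satisfaction of the a-formula `μ ≤ P` (with `P` a polynomial in `ν` with
integer coefficients) by an interpretation. -/
def satA (I : Interp X) (P : Polynomial ℤ) : Prop :=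
  I.mu ≤ (P.map (Int.castRingHom ℝ)).eval I.nu

/-- `Γ ⊨_UCL ψ` for a finite set `Γ` of a-formulas and a c-formula `ψ`. -/
def entails [DecidableEq X] (Γ : List (Polynomial ℤ)) (ψ : Form X) : Prop :=
  ∀ I : Interp X, (∀ P ∈ Γ, satA I P) → satC I ψ

/-- UCL-satisfiability of a c-formula. -/
def UCLSat [DecidableEq X] (ψ : Form X) : Prop :=
  ∃ I : Interp X, satC I ψ

end UCL

/-!
Every outcome `φ` of `ψ` arises by resolving each of the `m` unreliable gates of `ψ` either as
its ideal (probability `ν`) or as its negated (probability `1 - ν`) counterpart, so there are at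
most `2 ^ m` outcomes and `Pν[ψ ▷ φ] = ν ^ a * (1 - ν) ^ b` with `a + b ≤ m`. The coefficients of
such a polynomial are signed binomial coefficients, bounded by `2 ^ m`; summing at most `2 ^ m`
of them gives the bound `4 ^ m`.
-/

namespace Polynomial

variable {R : Type*} [CommRing R]

def IntCoeffsBounded (B : ℤ) (p : R[X]) : Prop :=
  ∀ n, ∃ z : ℤ, p.coeff n = z ∧ |z| ≤ B

namespace IntCoeffsBounded

variable {B : ℤ} {p : R[X]}

theorem one : IntCoeffsBounded 1 (1 : R[X]) := fun n => by
  refine ⟨if n = 0 then 1 else 0, ?_, ?_⟩ <;> split_ifs <;> simp_all [coeff_one]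

theorem X_pow_mul (h : IntCoeffsBounded B p) (a : ℕ) : IntCoeffsBounded B (X ^ a * p) := by
  intro n
  rw [coeff_X_pow_mul']
  split_ifs
  · exact h _
  · obtain ⟨z, -, hzB⟩ := h 0
    exact ⟨0, by simp, (abs_nonneg z).trans hzB⟩

theorem mul_one_sub_X (h : IntCoeffsBounded B p) : IntCoeffsBounded (2 * B) (p * (1 - X)) := by
  intro n
  rw [mul_one_sub, coeff_sub]
  cases n with
  | zero =>
    obtain ⟨z, hz, hzB⟩ := h 0
    exact ⟨z, by simp [hz], by linarith [abs_nonneg z]⟩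
  | succ n =>
    obtain ⟨z, hz, hzB⟩ := h (n + 1)
    obtain ⟨z', hz', hz'B⟩ := h n
    refine ⟨z - z', by simp [coeff_mul_X, hz, hz'], ?_⟩
    linarith [abs_sub z z']

theorem sum {ι : Type*} {s : Finset ι} {f : ι → R[X]}
    (h : ∀ i ∈ s, IntCoeffsBounded B (f i)) : IntCoeffsBounded (s.card * B) (∑ i ∈ s, f i) := by
  classical
  induction s using Finset.induction_on with
  | empty => exact fun n => ⟨0, by simp, by simp⟩
  | insert i s hi ih =>
    intro n
    obtain ⟨z, hz, hzB⟩ := h i (Finset.mem_insert_self i s) n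
    obtain ⟨z', hz', hz'B⟩ := ih (fun j hj => h j (Finset.mem_insert_of_mem hj)) n
    refine ⟨z + z', by simp [Finset.sum_insert hi, finsetSum_coeff, hz, ← hz'], ?_⟩
    rw [Finset.card_insert_of_notMem hi]
    push_cast
    linarith [abs_add_le z z']

end IntCoeffsBounded

theorem intCoeffsBounded_X_pow_mul_one_sub_X_pow (a b : ℕ) :
    IntCoeffsBounded (2 ^ b) (X ^ a * (1 - X) ^ b : R[X]) := by
  refine IntCoeffsBounded.X_pow_mul ?_ a
  induction b with
  | zero => simpa using IntCoeffsBounded.one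
  | succ b ih => simpa [pow_succ, mul_comm] using ih.mul_one_sub_X

/-- The probability `ν ^ a * (1 - ν) ^ b` that `a` given gates out of at most `n` independent ones,
each correct with probability `ν`, are correct and `b` others are not. -/
def IsBernoulliMonomial (n : ℕ) (p : R[X]) : Prop :=
  ∃ a b : ℕ, a + b ≤ n ∧ p = X ^ a * (1 - X) ^ b

namespace IsBernoulliMonomial

variable {n n' : ℕ} {p q : R[X]}

theorem one : IsBernoulliMonomial n (1 : R[X]) := ⟨0, 0, by simp, by simp⟩

theorem mul (hp : IsBernoulliMonomial n p) (hq : IsBernoulliMonomial n' q) :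
    IsBernoulliMonomial (n + n') (p * q) := by
  obtain ⟨a, b, hab, rfl⟩ := hp
  obtain ⟨a', b', hab', rfl⟩ := hq
  exact ⟨a + a', b + b', by omega, by ring⟩

theorem prod {ι : Type*} {s : Finset ι} {N : ι → ℕ} {f : ι → R[X]}
    (h : ∀ i ∈ s, IsBernoulliMonomial (N i) (f i)) :
    IsBernoulliMonomial (∑ i ∈ s, N i) (∏ i ∈ s, f i) := by
  classical
  induction s using Finset.induction_on with
  | empty => simpa using one
  | insert i s hi ih =>
    rw [Finset.sum_insert hi, Finset.prod_insert hi]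
    exact (h i (Finset.mem_insert_self i s)).mul
      (ih fun j hj => h j (Finset.mem_insert_of_mem hj))

theorem degree_le (h : IsBernoulliMonomial n p) : p.degree ≤ n := by
  obtain ⟨a, b, hab, rfl⟩ := h
  calc (X ^ a * (1 - X) ^ b : R[X]).degree ≤ ↑(a + b) := by compute_degree; norm_cast
    _ ≤ n := by exact_mod_cast hab

theorem intCoeffsBounded (h : IsBernoulliMonomial n p) : IntCoeffsBounded (2 ^ n) p := by
  obtain ⟨a, b, hab, rfl⟩ := h
  intro k
  obtain ⟨z, hz, hzB⟩ := intCoeffsBounded_X_pow_mul_one_sub_X_pow (R := R) a b k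
  exact ⟨z, hz, hzB.trans (pow_le_pow_right₀ (by norm_num) (by omega))⟩

end IsBernoulliMonomial

end Polynomial

namespace UCL

open Polynomial

variable {X : Type}

def outcomeModes : Mode → Finset Mode
  | .unreliable => {.ideal, .negated}
  | m => {m}

theorem mem_outcomeModes_self {m : Mode} (hm : m ≠ .unreliable) : m ∈ outcomeModes m := by
  cases m <;> simp_all [outcomeModes]

theorem card_outcomeModes_le (m : Mode) :
    (outcomeModes m).card ≤ 2 ^ (if m = .unreliable then 1 else 0) := by
  cases m <;> simp [outcomeModes]

/-- Induction on `Outcome` in which the three rules for each connective family are merged into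
one, indexed by the admissible outcome modes, and the reflexive outcome of a PL formula is
unfolded into such steps, so that only the atoms remain as base cases. -/
@[elab_as_elim]
theorem Outcome.modeInduction {motive : Form X → Form X → Prop}
    (verum : motive .verum .verum) (falsum : motive .falsum .falsum)
    (var : ∀ x, motive (.var x) (.var x))
    (not : ∀ {m m' φ ψ}, m' ∈ outcomeModes m → motive φ ψ → motive (.not m' φ) (.not m ψ))
    (bin : ∀ {c m m' φ₁ φ₂ ψ₁ ψ₂}, m' ∈ outcomeModes m → motive φ₁ ψ₁ → motive φ₂ ψ₂ →
      motive (.bin c m' φ₁ φ₂) (.bin c m ψ₁ ψ₂))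
    (maj : ∀ {k m m' f g}, m' ∈ outcomeModes m → (∀ i, motive (f i) (g i)) →
      motive (.maj k m' f) (.maj k m g))
    {φ ψ : Form X} (h : Outcome φ ψ) : motive φ ψ := by
  have ideal_mem : Mode.ideal ∈ outcomeModes .unreliable := by simp [outcomeModes]
  have negated_mem : Mode.negated ∈ outcomeModes .unreliable := by simp [outcomeModes]
  induction h with
  | refl φ hφ =>
    induction φ with
    | verum => exact verum
    | falsum => exact falsum
    | var x => exact var x
    | not m φ ih => exact not (mem_outcomeModes_self hφ.1) (ih hφ.2)
    | bin c m φ₁ φ₂ ih₁ ih₂ =>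
      exact bin (mem_outcomeModes_self hφ.1) (ih₁ hφ.2.1) (ih₂ hφ.2.2)
    | maj k m f ih => exact maj (mem_outcomeModes_self hφ.1) fun i => ih i (hφ.2 i)
  | notC hm _ ih => exact not (mem_outcomeModes_self hm) ih
  | binC hm _ _ ih₁ ih₂ => exact bin (mem_outcomeModes_self hm) ih₁ ih₂
  | majC hm _ ih => exact maj (mem_outcomeModes_self hm) ih
  | notOk _ ih => exact not ideal_mem ih
  | notFail _ ih => exact not negated_mem ih
  | binOk _ _ ih₁ ih₂ => exact bin ideal_mem ih₁ ih₂
  | binFail _ _ ih₁ ih₂ => exact bin negated_mem ih₁ ih₂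
  | majOk _ ih => exact maj ideal_mem ih
  | majFail _ ih => exact maj negated_mem ih

section PossibleOutcomes

open scoped Classical

noncomputable def Form.possibleOutcomes : Form X → Finset (Form X)
  | .verum => {.verum}
  | .falsum => {.falsum}
  | .var x => {.var x}
  | .not m φ => (outcomeModes m ×ˢ φ.possibleOutcomes).image fun p => .not p.1 p.2
  | .bin c m φ ψ =>
      (outcomeModes m ×ˢ φ.possibleOutcomes ×ˢ ψ.possibleOutcomes).image
        fun p => .bin c p.1 p.2.1 p.2.2
  | .maj k m f =>
      (outcomeModes m ×ˢ Fintype.piFinset fun i => (f i).possibleOutcomes).image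
        fun p => .maj k p.1 p.2

theorem Outcome.mem_possibleOutcomes {φ ψ : Form X} (h : Outcome φ ψ) :
    φ ∈ ψ.possibleOutcomes := by
  refine h.modeInduction ?verum ?falsum ?var ?not ?bin ?maj
  case verum | falsum | var => simp [Form.possibleOutcomes]
  case not => exact fun hm ih => Finset.mem_image_of_mem _ (Finset.mk_mem_product hm ih)
  case bin => exact fun hm ih₁ ih₂ =>
    Finset.mem_image_of_mem _ (Finset.mk_mem_product hm (Finset.mk_mem_product ih₁ ih₂))
  case maj => exact fun hm ih =>
    Finset.mem_image_of_mem _ (Finset.mk_mem_product hm (Fintype.mem_piFinset.2 ih))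

theorem Form.card_possibleOutcomes_le (ψ : Form X) :
    ψ.possibleOutcomes.card ≤ 2 ^ ψ.unrelCount := by
  induction ψ with
  | verum => simp [possibleOutcomes, unrelCount]
  | falsum => simp [possibleOutcomes, unrelCount]
  | var x => simp [possibleOutcomes, unrelCount]
  | not m φ ih =>
    rw [possibleOutcomes, unrelCount, pow_add]
    calc _ ≤ (outcomeModes m).card * φ.possibleOutcomes.card :=
          Finset.card_image_le.trans (Finset.card_product _ _).le
      _ ≤ 2 ^ (if m = .unreliable then 1 else 0) * 2 ^ φ.unrelCount :=
          Nat.mul_le_mul (card_outcomeModes_le m) ih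
  | bin c m φ ψ ih₁ ih₂ =>
    rw [possibleOutcomes, unrelCount, pow_add, pow_add, mul_assoc]
    calc _ ≤ (outcomeModes m).card * (φ.possibleOutcomes.card * ψ.possibleOutcomes.card) := by
          refine Finset.card_image_le.trans ?_
          rw [Finset.card_product, Finset.card_product]
      _ ≤ 2 ^ (if m = .unreliable then 1 else 0) * (2 ^ φ.unrelCount * 2 ^ ψ.unrelCount) :=
          Nat.mul_le_mul (card_outcomeModes_le m) (Nat.mul_le_mul ih₁ ih₂)
  | maj k m f ih =>
    rw [possibleOutcomes, unrelCount, pow_add, ← Finset.prod_pow_eq_pow_sum]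
    calc _ ≤ (outcomeModes m).card * ∏ i, (f i).possibleOutcomes.card := by
          refine Finset.card_image_le.trans ?_
          rw [Finset.card_product, Fintype.card_piFinset]
      _ ≤ 2 ^ (if m = .unreliable then 1 else 0) * ∏ i, 2 ^ (f i).unrelCount :=
          Nat.mul_le_mul (card_outcomeModes_le m) (Finset.prod_le_prod' fun i _ => ih i)

end PossibleOutcomes

section Probability

variable [DecidableEq X]

theorem isBernoulliMonomial_modeFactor {m m' : Mode} (h : m' ∈ outcomeModes m) :
    IsBernoulliMonomial (if m = .unreliable then 1 else 0) (modeFactor m m') := by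
  cases m <;> cases m' <;> simp [outcomeModes] at h
  · exact IsBernoulliMonomial.one
  · exact IsBernoulliMonomial.one
  · exact ⟨1, 0, le_rfl, by simp [modeFactor]⟩
  · exact ⟨0, 1, le_rfl, by simp [modeFactor]⟩

theorem Outcome.isBernoulliMonomial_prob {φ ψ : Form X} (h : Outcome φ ψ) :
    IsBernoulliMonomial ψ.unrelCount (ψ.prob φ) := by
  refine h.modeInduction ?verum ?falsum ?var ?not ?bin ?maj
  case verum | falsum | var => simp [Form.prob, IsBernoulliMonomial.one]
  case not =>
    intro m m' φ ψ hm ih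
    simpa [Form.prob, Form.unrelCount] using (isBernoulliMonomial_modeFactor hm).mul ih
  case bin =>
    intro c m m' φ₁ φ₂ ψ₁ ψ₂ hm ih₁ ih₂
    simpa [Form.prob, Form.unrelCount, add_assoc] using
      (isBernoulliMonomial_modeFactor hm).mul (ih₁.mul ih₂)
  case maj =>
    intro k m m' f g hm ih
    simpa [Form.prob, Form.unrelCount] using
      (isBernoulliMonomial_modeFactor hm).mul (IsBernoulliMonomial.prod fun i _ => ih i)

open Classical in
theorem Ppoly_eq_sum (v : X → Bool) (ψ : Form X) :
    Ppoly v ψ = ∑ φ ∈ ψ.possibleOutcomes with Outcome φ ψ ∧ φ.eval v = true, ψ.prob φ := by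
  have hS : {φ | Outcome φ ψ ∧ φ.eval v = true} =
      ↑(ψ.possibleOutcomes.filter fun φ => Outcome φ ψ ∧ φ.eval v = true) := by
    ext φ
    simpa using fun (h : Outcome φ ψ) _ => h.mem_possibleOutcomes
  rw [Ppoly, hS, finsum_mem_coe_finset]

end Probability

end UCL

open UCL in
/-- For every c-formula `ψ` with exactly `m` occurrences of unreliable
connectives and every valuation `v`, the polynomial `P^v_ψ ∈ ℝ[ν]` has degree
at most `m` and all its coefficients are integers of absolute value at most
`4^m`. -/
theorem stmt8 {X : Type} [DecidableEq X] (ψ : Form X) (m : ℕ)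
    (hm : ψ.unrelCount = m) (v : X → Bool) :
    (Ppoly v ψ).degree ≤ (m : ℕ) ∧
      ∀ n : ℕ, ∃ z : ℤ, (Ppoly v ψ).coeff n = (z : ℝ) ∧ |z| ≤ 4 ^ m := by
  classical
  subst hm
  rw [Ppoly_eq_sum]
  set S := ψ.possibleOutcomes.filter fun φ => Outcome φ ψ ∧ φ.eval v = true
  have hS : ∀ φ ∈ S, Polynomial.IsBernoulliMonomial ψ.unrelCount (ψ.prob φ) :=
    fun φ hφ => (Finset.mem_filter.1 hφ).2.1.isBernoulliMonomial_prob
  have hcard : S.card ≤ 2 ^ ψ.unrelCount :=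
    (Finset.card_filter_le _ _).trans ψ.card_possibleOutcomes_le
  refine ⟨(Polynomial.degree_sum_le _ _).trans (Finset.sup_le fun φ hφ => (hS φ hφ).degree_le),
    fun n => ?_⟩
  obtain ⟨z, hz, hzB⟩ := Polynomial.IntCoeffsBounded.sum (fun φ hφ => (hS φ hφ).intCoeffsBounded) n
  refine ⟨z, hz, hzB.trans ?_⟩
  calc (S.card : ℤ) * 2 ^ ψ.unrelCount ≤ 2 ^ ψ.unrelCount * 2 ^ ψ.unrelCount := by
        gcongr; exact_mod_cast hcard
    _ = 4 ^ ψ.unrelCount := by rw [← mul_pow]; norm_num
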